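/- arXiv:1712.06250 — 5 statements merged into one kernel-verified Lean document; each statement's English description precedes it below -/
import Mathlib

section
/- For λ ≥ 0, the function F(λ) = W·log₂(1 + γΘλ/2) - Θλ²/2, with W, γ, Θ > 0, is strictly concave, and its unique maximizer on [0,∞) is λ* = (√(log₂(e)·γ²·W·Θ + 1) - 1)/(γΘ). -/
open Real

lemma aux_conc (W γ Θ : ℝ) (hW : 0 < W) (hγ : 0 < γ) (hΘ : 0 < Θ) :
    StrictConcaveOn ℝ (Set.Ici 0)
      (fun lam : ℝ => W * logb 2 (1 + γ * Θ * lam / 2) - Θ * lam ^ 2 / 2) := by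
  have hL : (0:ℝ) < Real.log 2 := Real.log_pos one_lt_two
  refine ⟨convex_Ici 0, ?_⟩
  intro x hx y hy hxy p q hp hq hpq
  simp only [smul_eq_mul]
  have hx0 : (0:ℝ) ≤ x := hx
  have hy0 : (0:ℝ) ≤ y := hy
  have hux : 0 < 1 + γ * Θ * x / 2 := by nlinarith [mul_nonneg (mul_pos hγ hΘ).le hx0]
  have huy : 0 < 1 + γ * Θ * y / 2 := by nlinarith [mul_nonneg (mul_pos hγ hΘ).le hy0]
  have hlog := (strictConcaveOn_log_Ioi.concaveOn).2 (Set.mem_Ioi.mpr hux)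
    (Set.mem_Ioi.mpr huy) hp.le hq.le hpq
  simp only [smul_eq_mul] at hlog
  have harg : p * (1 + γ * Θ * x / 2) + q * (1 + γ * Θ * y / 2)
      = 1 + γ * Θ * (p * x + q * y) / 2 := by linear_combination hpq
  rw [harg] at hlog
  have h3 : p * (W * Real.logb 2 (1 + γ * Θ * x / 2))
      + q * (W * Real.logb 2 (1 + γ * Θ * y / 2))
      ≤ W * Real.logb 2 (1 + γ * Θ * (p * x + q * y) / 2) := by
    simp only [Real.logb]
    have h := mul_le_mul_of_nonneg_left hlog (le_of_lt (div_pos hW hL))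
    have e1 : W / Real.log 2 * (p * Real.log (1 + γ * Θ * x / 2)
        + q * Real.log (1 + γ * Θ * y / 2))
        = p * (W * (Real.log (1 + γ * Θ * x / 2) / Real.log 2))
        + q * (W * (Real.log (1 + γ * Θ * y / 2) / Real.log 2)) := by ring
    have e2 : W / Real.log 2 * Real.log (1 + γ * Θ * (p * x + q * y) / 2)
        = W * (Real.log (1 + γ * Θ * (p * x + q * y) / 2) / Real.log 2) := by ring
    rw [e1, e2] at h
    exact h
  have hxy2 : 0 < (x - y) ^ 2 := by
    have : x - y ≠ 0 := sub_ne_zero.mpr hxy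
    positivity
  have hquad : Θ * (p * x + q * y) ^ 2 + Θ * (p * q * (x - y) ^ 2) = Θ * (p * x ^ 2 + q * y ^ 2) := by
    linear_combination Θ * (x ^ 2 * p + y ^ 2 * q) * hpq
  have hpos : 0 < Θ * (p * q * (x - y) ^ 2) := mul_pos hΘ (mul_pos (mul_pos hp hq) hxy2)
  nlinarith [h3, hquad, hpos]

lemma aux_key (W γ Θ t : ℝ) (hW : 0 < W) (hγ : 0 < γ) (hΘ : 0 < Θ) (ht : 0 ≤ t)
    (hid : Θ * t * (1 + γ * Θ * t / 2) * Real.log 2 = W * (γ * Θ / 2)) :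
    ∀ x : ℝ, 0 ≤ x →
      (W * logb 2 (1 + γ * Θ * x / 2) - Θ * x ^ 2 / 2) + Θ * (x - t) ^ 2 / 2
        ≤ W * logb 2 (1 + γ * Θ * t / 2) - Θ * t ^ 2 / 2 := by
  have hL : (0:ℝ) < Real.log 2 := Real.log_pos one_lt_two
  intro x hx
  have hux : 0 < 1 + γ * Θ * x / 2 := by nlinarith [mul_nonneg (mul_pos hγ hΘ).le hx]
  have hut : 0 < 1 + γ * Θ * t / 2 := by nlinarith [mul_nonneg (mul_pos hγ hΘ).le ht]
  have hlog : Real.log (1 + γ * Θ * x / 2) - Real.log (1 + γ * Θ * t / 2) ≤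
      (1 + γ * Θ * x / 2) / (1 + γ * Θ * t / 2) - 1 := by
    rw [← Real.log_div (ne_of_gt hux) (ne_of_gt hut)]
    exact Real.log_le_sub_one_of_pos (div_pos hux hut)
  have h4 : W / Real.log 2 * (Real.log (1 + γ * Θ * x / 2) - Real.log (1 + γ * Θ * t / 2)) ≤
      W / Real.log 2 * ((1 + γ * Θ * x / 2) / (1 + γ * Θ * t / 2) - 1) :=
    mul_le_mul_of_nonneg_left hlog (le_of_lt (div_pos hW hL))
  have h5 : W / Real.log 2 * ((1 + γ * Θ * x / 2) / (1 + γ * Θ * t / 2) - 1)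
      = Θ * t * (x - t) := by
    field_simp
    linear_combination (t - x) * 2 * hid
  rw [h5] at h4
  simp only [Real.logb]
  have e1 : W * (Real.log (1 + γ * Θ * x / 2) / Real.log 2)
      - W * (Real.log (1 + γ * Θ * t / 2) / Real.log 2)
      = W / Real.log 2 * (Real.log (1 + γ * Θ * x / 2) - Real.log (1 + γ * Θ * t / 2)) := by
    ring
  have e2 : Θ * t * (x - t) + Θ * (x - t) ^ 2 / 2 - Θ * x ^ 2 / 2 + Θ * t ^ 2 / 2 = 0 := by
    ring
  linarith [h4, e1, e2]

/-- F(λ) = W·log₂(1 + γΘλ/2) - Θλ²/2 is strictly concave on [0,∞), and its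
unique maximizer there is λ* = (√(log₂(e)·γ²·W·Θ + 1) - 1)/(γΘ). -/
theorem stmt_2 (W γ Θ : ℝ) (hW : 0 < W) (hγ : 0 < γ) (hΘ : 0 < Θ) :
    StrictConcaveOn ℝ (Set.Ici 0)
      (fun lam : ℝ => W * logb 2 (1 + γ * Θ * lam / 2) - Θ * lam ^ 2 / 2) ∧
    IsMaxOn (fun lam : ℝ => W * logb 2 (1 + γ * Θ * lam / 2) - Θ * lam ^ 2 / 2)
      (Set.Ici 0) ((Real.sqrt (logb 2 (Real.exp 1) * γ ^ 2 * W * Θ + 1) - 1) / (γ * Θ)) ∧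
    ∀ x ∈ Set.Ici (0 : ℝ),
      IsMaxOn (fun lam : ℝ => W * logb 2 (1 + γ * Θ * lam / 2) - Θ * lam ^ 2 / 2)
        (Set.Ici 0) x →
      x = (Real.sqrt (logb 2 (Real.exp 1) * γ ^ 2 * W * Θ + 1) - 1) / (γ * Θ) := by
  have hL : (0:ℝ) < Real.log 2 := Real.log_pos one_lt_two
  have he : Real.logb 2 (Real.exp 1) = 1 / Real.log 2 := by
    rw [Real.logb, Real.log_exp]
  have hc : 0 < Real.logb 2 (Real.exp 1) * γ ^ 2 * W * Θ := by
    rw [he]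
    exact mul_pos (mul_pos (mul_pos (div_pos one_pos hL) (pow_pos hγ 2)) hW) hΘ
  have hs2 : (Real.sqrt (Real.logb 2 (Real.exp 1) * γ ^ 2 * W * Θ + 1)) ^ 2
      = Real.logb 2 (Real.exp 1) * γ ^ 2 * W * Θ + 1 := Real.sq_sqrt (by linarith)
  have hs0 : 0 ≤ Real.sqrt (Real.logb 2 (Real.exp 1) * γ ^ 2 * W * Θ + 1) :=
    Real.sqrt_nonneg _
  have hs1 : 1 < Real.sqrt (Real.logb 2 (Real.exp 1) * γ ^ 2 * W * Θ + 1) := by nlinarith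
  set s : ℝ := Real.sqrt (Real.logb 2 (Real.exp 1) * γ ^ 2 * W * Θ + 1) with hsdef
  clear_value s
  have ht0 : 0 < (s - 1) / (γ * Θ) := div_pos (by linarith) (mul_pos hγ hΘ)
  have hid : Θ * ((s - 1) / (γ * Θ)) * (1 + γ * Θ * ((s - 1) / (γ * Θ)) / 2) * Real.log 2
      = W * (γ * Θ / 2) := by
    rw [he] at hs2
    have hs2' : s ^ 2 * Real.log 2 = γ ^ 2 * W * Θ + Real.log 2 := by
      rw [hs2]; field_simp
    field_simp
    linear_combination hs2'
  have hkey := aux_key W γ Θ ((s - 1) / (γ * Θ)) hW hγ hΘ ht0.le hid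
  refine ⟨aux_conc W γ Θ hW hγ hΘ, ?_, ?_⟩
  · intro x hx
    have h := hkey x hx
    have h2 : 0 ≤ Θ * (x - (s - 1) / (γ * Θ)) ^ 2 / 2 := by positivity
    simp only [Set.mem_setOf_eq]
    linarith
  · intro x hx hmax
    have h1 := hmax (Set.mem_Ici.mpr ht0.le)
    simp only [Set.mem_setOf_eq] at h1
    have h2 := hkey x hx
    have h3 : Θ * (x - (s - 1) / (γ * Θ)) ^ 2 / 2 ≤ 0 := by linarith
    have h4 : (x - (s - 1) / (γ * Θ)) ^ 2 ≤ 0 := by nlinarith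
    have h5 : (x - (s - 1) / (γ * Θ)) ^ 2 = 0 := le_antisymm h4 (sq_nonneg _)
    have h6 := pow_eq_zero_iff (n := 2) (by norm_num) |>.mp h5
    linarith [sub_eq_zero.mp h6]
end

section
/- In any feasible contract (satisfying all IC constraints), for any two types i, j: π_i > π_j if and only if q_i > q_j. -/
/-- In any feasible contract (all IC constraints), π_i > π_j iff q_i > q_j. -/
theorem stmt_5 (K : ℕ) (θ q π : Fin K → ℝ)
    (hθ : ∀ k, 0 < θ k) (hq : ∀ k, 0 ≤ q k) (hπ : ∀ k, 0 ≤ π k)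
    (hIC : ∀ k j, π k - (q k) ^ 2 / θ k ≥ π j - (q j) ^ 2 / θ k) :
    ∀ i j, π i > π j ↔ q i > q j := by
  intro i j
  constructor
  · intro h
    have hic := hIC j i
    have hθj := hθ j
    have hneg : ((q j) ^ 2 - (q i) ^ 2) / θ j < 0 := by
      rw [sub_div]; linarith
    have h2 : (q j) ^ 2 < (q i) ^ 2 := by
      by_contra hcon
      push_neg at hcon
      have : 0 ≤ ((q j) ^ 2 - (q i) ^ 2) / θ j :=
        div_nonneg (by linarith) hθj.le
      linarith
    exact lt_of_pow_lt_pow_left₀ 2 (hq i) h2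
  · intro h
    have hic := hIC i j
    have hθi := hθ i
    have h2 : (q j) ^ 2 < (q i) ^ 2 := pow_lt_pow_left₀ h (hq j) two_ne_zero
    have hpos : 0 < ((q i) ^ 2 - (q j) ^ 2) / θ i := div_pos (by linarith) hθi
    rw [sub_div] at hpos
    linarith
end

section
/- In any feasible contract (satisfying all IC constraints), for any two types i, j: π_i = π_j if and only if q_i = q_j. -/
/-- In any feasible contract (all IC constraints), π_i = π_j iff q_i = q_j. -/
theorem stmt_6 (K : ℕ) (θ q π : Fin K → ℝ)
    (hθ : ∀ k, 0 < θ k) (hq : ∀ k, 0 ≤ q k) (hπ : ∀ k, 0 ≤ π k)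
    (hIC : ∀ k j, π k - (q k) ^ 2 / θ k ≥ π j - (q j) ^ 2 / θ k) :
    ∀ i j, π i = π j ↔ q i = q j := by
  intro i j
  have h1 := hIC i j
  have h2 := hIC j i
  have hi := hθ i
  have hj := hθ j
  constructor
  · intro hpi
    have hq1 : (q i) ^ 2 / θ i ≤ (q j) ^ 2 / θ i := by linarith
    have hq2 : (q j) ^ 2 / θ j ≤ (q i) ^ 2 / θ j := by linarith
    have e1 : (q i) ^ 2 ≤ (q j) ^ 2 := (div_le_div_iff_of_pos_right hi).mp hq1
    have e2 : (q j) ^ 2 ≤ (q i) ^ 2 := (div_le_div_iff_of_pos_right hj).mp hq2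
    have : (q i) ^ 2 = (q j) ^ 2 := le_antisymm e1 e2
    have habs : |q i| = |q j| := by rw [← Real.sqrt_sq_eq_abs, ← Real.sqrt_sq_eq_abs, this]
    rwa [abs_of_nonneg (hq i), abs_of_nonneg (hq j)] at habs
  · intro hqe
    rw [hqe] at h1 h2
    linarith
end

section
/- With the closed-form rewards π_k = q_k²/θ_k + Σ_{n=2}^{k} (1/θ_{n-1} - 1/θ_n)·q_{n-1}², if 0 < θ_1 < ⋯ < θ_K and 0 ≤ q_1 ≤ q_2 ≤ ⋯ ≤ q_K, then π_1 ≤ π_2 ≤ ⋯ ≤ π_K. -/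
/-- With the closed-form rewards, ordered positive types, and monotone powers,
the rewards are monotone: π_1 ≤ ⋯ ≤ π_K. -/
theorem stmt_13 (K : ℕ) (θ q π : ℕ → ℝ)
    (hθpos : ∀ k, 1 ≤ k → k ≤ K → 0 < θ k)
    (hθmono : ∀ i j, 1 ≤ i → i < j → j ≤ K → θ i < θ j)
    (hq0 : ∀ k, 1 ≤ k → k ≤ K → 0 ≤ q k)
    (hqmono : ∀ i j, 1 ≤ i → i ≤ j → j ≤ K → q i ≤ q j)
    (hπ : ∀ k, 1 ≤ k → k ≤ K →
      π k = (q k) ^ 2 / θ k +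
        ∑ n ∈ Finset.Icc 2 k, (1 / θ (n - 1) - 1 / θ n) * (q (n - 1)) ^ 2) :
    ∀ i j, 1 ≤ i → i ≤ j → j ≤ K → π i ≤ π j := by
  have step : ∀ k, 1 ≤ k → k + 1 ≤ K → π k ≤ π (k + 1) := by
    intro k hk hk1
    have hkK : k ≤ K := le_trans (Nat.le_succ k) hk1
    have hθk : 0 < θ k := hθpos k hk hkK
    have hθk1 : 0 < θ (k + 1) := hθpos (k + 1) (by omega) hk1
    rw [hπ k hk hkK, hπ (k + 1) (by omega) hk1]
    rw [Finset.sum_Icc_succ_top (by omega : 2 ≤ k + 1)]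
    simp only [Nat.add_sub_cancel]
    have hq : q k ≤ q (k + 1) := hqmono k (k + 1) hk (Nat.le_succ k) hk1
    have hqk : 0 ≤ q k := hq0 k hk hkK
    have key : q k ^ 2 / θ k ≤ q (k + 1) ^ 2 / θ (k + 1)
        + (1 / θ k - 1 / θ (k + 1)) * q k ^ 2 := by
      have h1 : q k ^ 2 ≤ q (k + 1) ^ 2 := by nlinarith
      have h2 : q k ^ 2 / θ (k + 1) ≤ q (k + 1) ^ 2 / θ (k + 1) :=
        by gcongr
      have e : q k ^ 2 / θ k = q k ^ 2 / θ (k + 1)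
          + (1 / θ k - 1 / θ (k + 1)) * q k ^ 2 := by
        field_simp; ring
      linarith
    linarith
  intro i j hi hij hjK
  induction j with
  | zero => omega
  | succ n ih =>
    rcases Nat.lt_or_ge i (n + 1) with h | h
    · exact (ih (by omega) (by omega)).trans (step n (by omega) hjK)
    · have : i = n + 1 := by omega
      subst this; exact le_refl _
end

section
/- Let Θ > 0, γ > 0, W > 0 and define λ* = (√(c·γ²·W·Θ + 1) - 1)/(γΘ) with c = log₂(e). Then the DAP's optimal utility in the unified-price Stackelberg game, W·log₂(1 + γΘλ*/2) - Θ(λ*)²/2, is strictly increasing in Θ. -/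
open Real

lemma aux_log_ineq (a b : ℝ) (ha : 1 < a) (hab : a < b) :
    Real.log ((1 + a) / 2) + 1 / (1 + a) < Real.log ((1 + b) / 2) + 1 / (1 + b) := by
  have h1 : (0:ℝ) < 1 + a := by linarith
  have h2 : (0:ℝ) < 1 + b := by linarith
  have hx : (1:ℝ) < (1 + b) / (1 + a) := by
    rw [lt_div_iff₀ h1]; linarith
  -- log x > 1 - 1/x for x > 1
  have hkey : 1 - (1 + a) / (1 + b) < Real.log ((1 + b) / (1 + a)) := by
    have hlogpos : 0 < Real.log ((1 + b) / (1 + a)) := Real.log_pos hx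
    have := Real.add_one_lt_exp (x := -Real.log ((1 + b) / (1 + a))) (by linarith)
    rw [Real.exp_neg, Real.exp_log (by linarith)] at this
    have hinv : ((1 + b) / (1 + a))⁻¹ = (1 + a) / (1 + b) := by
      rw [inv_div]
    rw [hinv] at this
    linarith
  have hlogdiff : Real.log ((1 + b) / 2) - Real.log ((1 + a) / 2)
      = Real.log ((1 + b) / (1 + a)) := by
    rw [Real.log_div (by linarith) (by norm_num), Real.log_div (by linarith) (by norm_num),
      Real.log_div (by linarith) (by linarith)]
    ring
  have hineq : 1 / (1 + a) - 1 / (1 + b) < 1 - (1 + a) / (1 + b) := by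
    rw [div_sub_div _ _ (ne_of_gt h1) (ne_of_gt h2), div_lt_iff₀ (by positivity)]
    have : 1 - (1 + a) / (1 + b) = (b - a) / (1 + b) := by
      field_simp; ring
    rw [this, div_mul_eq_mul_div, lt_div_iff₀ h2]
    nlinarith [mul_pos (mul_pos (sub_pos.2 hab) h2) (lt_trans one_pos ha)]
  linarith

lemma val_rewrite (W γ Θ : ℝ) (hW : 0 < W) (hγ : 0 < γ) (hΘ : 0 < Θ) :
    W * logb 2 (1 + γ * Θ * ((Real.sqrt (logb 2 (Real.exp 1) * γ ^ 2 * W * Θ + 1) - 1) / (γ * Θ)) / 2)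
      - Θ * ((Real.sqrt (logb 2 (Real.exp 1) * γ ^ 2 * W * Θ + 1) - 1) / (γ * Θ)) ^ 2 / 2
    = W * logb 2 (Real.exp 1) *
        (Real.log ((1 + Real.sqrt (logb 2 (Real.exp 1) * γ ^ 2 * W * Θ + 1)) / 2)
          + 1 / (1 + Real.sqrt (logb 2 (Real.exp 1) * γ ^ 2 * W * Θ + 1)))
      - W * logb 2 (Real.exp 1) / 2 := by
  have hlog2 : (0:ℝ) < Real.log 2 := Real.log_pos (by norm_num)
  have hc : logb 2 (Real.exp 1) = (Real.log 2)⁻¹ := by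
    rw [Real.logb, Real.log_exp, one_div]
  have hcpos : (0:ℝ) < logb 2 (Real.exp 1) := by rw [hc]; positivity
  set c := logb 2 (Real.exp 1) with hcdef
  set s := Real.sqrt (c * γ ^ 2 * W * Θ + 1) with hsdef
  have hs2 : s ^ 2 = c * γ ^ 2 * W * Θ + 1 := Real.sq_sqrt (by positivity)
  have hsnn : 0 ≤ s := Real.sqrt_nonneg _
  have hpos : 0 < c * γ ^ 2 * W * Θ :=
    mul_pos (mul_pos (mul_pos hcpos (pow_pos hγ 2)) hW) hΘ
  have hs1 : 1 < s := by nlinarith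
  have hγΘ : γ * Θ ≠ 0 := by positivity
  have harg : 1 + γ * Θ * ((s - 1) / (γ * Θ)) / 2 = (1 + s) / 2 := by
    field_simp; ring
  rw [harg]
  have hlogb : logb 2 ((1 + s) / 2) = c * Real.log ((1 + s) / 2) := by
    rw [Real.logb, hc]; ring
  rw [hlogb]
  -- now the algebraic part: Θ * ((s-1)/(γΘ))^2 / 2 = W*c/2 - W*c/(1+s)
  have hquad : Θ * ((s - 1) / (γ * Θ)) ^ 2 / 2 = W * c / 2 - W * c / (1 + s) := by
    have h1s : (0:ℝ) < 1 + s := by linarith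
    field_simp
    linear_combination (s - 1) * hs2
  rw [hquad]
  ring

/-- The DAP's optimal utility in the unified-price Stackelberg game is strictly
increasing in the aggregate EAP quality Θ. -/
theorem stmt_18 (W γ : ℝ) (hW : 0 < W) (hγ : 0 < γ) :
    StrictMonoOn (fun Θ : ℝ =>
      let lam := (Real.sqrt (logb 2 (Real.exp 1) * γ ^ 2 * W * Θ + 1) - 1) / (γ * Θ)
      W * logb 2 (1 + γ * Θ * lam / 2) - Θ * lam ^ 2 / 2) (Set.Ioi 0) := by
  intro a ha b hb hab
  simp only [Set.mem_Ioi] at ha hb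
  simp only
  rw [val_rewrite W γ a hW hγ ha, val_rewrite W γ b hW hγ hb]
  have hlog2 : (0:ℝ) < Real.log 2 := Real.log_pos (by norm_num)
  have hcpos : (0:ℝ) < logb 2 (Real.exp 1) := by
    rw [Real.logb, Real.log_exp]; positivity
  set c := logb 2 (Real.exp 1) with hcdef
  set sa := Real.sqrt (c * γ ^ 2 * W * a + 1) with hsadef
  set sb := Real.sqrt (c * γ ^ 2 * W * b + 1) with hsbdef
  have hsa2 : sa ^ 2 = c * γ ^ 2 * W * a + 1 := Real.sq_sqrt (by positivity)
  have hposa : 0 < c * γ ^ 2 * W * a :=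
    mul_pos (mul_pos (mul_pos hcpos (pow_pos hγ 2)) hW) ha
  have hsa1 : 1 < sa := by
    nlinarith [Real.sqrt_nonneg (c * γ ^ 2 * W * a + 1)]
  have hsab : sa < sb := by
    apply Real.sqrt_lt_sqrt (by positivity)
    nlinarith [mul_pos (mul_pos (mul_pos hcpos (pow_pos hγ 2)) hW) (sub_pos.2 hab)]
  have := aux_log_ineq sa sb hsa1 hsab
  nlinarith [mul_pos hW hcpos]
end
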